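/- arXiv:2011.14171 — 2 statements merged into one kernel-verified Lean document; each statement's English description precedes it below -/
import Mathlib

section
/- Let X₁ have Gamma distribution with shape parameter 1 (exponential with rate 1, Laplace transform 1/(1+λ)), let θ have density π(x) = β x^{β-1} on [0,1] for β > 0, and suppose S ≥ 0 satisfies the distributional fixed-point equation S = X₁ + θ S' where X₁, θ, S' are independent and S' has the same law as S. Then the Laplace transform ψ(λ) = E[e^{-λS}] equals 1/(1+λ)^{1+β}; i.e., S has the Gamma distribution with shape parameter 1+β. -/
/-!
The Laplace transform ψ(λ) = E[exp(-λS)] is continuous on [0, ∞), satisfies ψ(0) = 1 and, by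
independence, ψ(λ) = (1 + λ)⁻¹ E[ψ(λθ)]. A beta integral, with antiderivative x^β (1 + λx)^(-β),
shows that (1 + λ)^(-(1+β)) solves the same equation. Since θ ∈ [0, 1], the difference d of two
such solutions obeys |d(m)| ≤ (1 + m)⁻¹ |d(m)| at any maximiser m > 0 of |d| on [0, L], so d = 0.
-/

open MeasureTheory ProbabilityTheory Set

lemma hasDerivAt_rpow_mul_one_add_mul_rpow {β l x : ℝ} (hx : 0 < x) (hlx : 0 < 1 + l * x) :
    HasDerivAt (fun y => y ^ β * (1 + l * y) ^ (-β))
      (β * x ^ (β - 1) * (1 + l * x) ^ (-(1 + β))) x := by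
  have hpow : HasDerivAt (fun y => y ^ β) (β * x ^ (β - 1)) x :=
    Real.hasDerivAt_rpow_const (Or.inl hx.ne')
  have hlin : HasDerivAt (fun y => 1 + l * y) l x := by
    simpa using ((hasDerivAt_id x).const_mul l).const_add 1
  refine (hpow.mul (hlin.rpow_const (p := -β) (Or.inl hlx.ne'))).congr_deriv ?_
  have e1 : x ^ β = x ^ (β - 1) * x := by
    rw [← Real.rpow_add_one hx.ne']; ring_nf
  have e2 : (1 + l * x) ^ (-β) = (1 + l * x) ^ (-(1 + β)) * (1 + l * x) := by
    rw [← Real.rpow_add_one hlx.ne']; ring_nf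
  rw [show -β - 1 = -(1 + β) by ring, e1, e2]
  ring

lemma integral_rpow_mul_one_add_mul_rpow {β l : ℝ} (hβ : 0 < β) (hl : 0 ≤ l) :
    ∫ x in (0 : ℝ)..1, β * x ^ (β - 1) * (1 + l * x) ^ (-(1 + β)) = (1 + l) ^ (-β) := by
  have hpos : ∀ x ∈ Icc (0 : ℝ) 1, 0 < 1 + l * x := fun x hx => by nlinarith [hx.1]
  have hlin : ∀ x, ContinuousAt (fun y : ℝ => 1 + l * y) x := fun x => by fun_prop
  have hcont : ContinuousOn (fun y : ℝ => (1 + l * y) ^ (-(1 + β))) (Icc 0 1) := fun x hx =>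
    ((hlin x).rpow_const (Or.inl (hpos x hx).ne')).continuousWithinAt
  have hanti : ContinuousOn (fun y : ℝ => y ^ β * (1 + l * y) ^ (-β)) (Icc 0 1) := fun x hx =>
    ((Real.continuousAt_rpow_const x β (Or.inr hβ.le)).mul
      ((hlin x).rpow_const (Or.inl (hpos x hx).ne'))).continuousWithinAt
  have hint : IntervalIntegrable (fun x => β * x ^ (β - 1) * (1 + l * x) ^ (-(1 + β))) volume 0 1 :=
    ((intervalIntegral.intervalIntegrable_rpow' (by linarith)).const_mul β).mul_continuousOn
      (by rwa [uIcc_of_le zero_le_one])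
  rw [intervalIntegral.integral_eq_sub_of_hasDerivAt_of_le zero_le_one hanti
    (fun x hx => hasDerivAt_rpow_mul_one_add_mul_rpow hx.1 (hpos x (Ioo_subset_Icc_self hx))) hint]
  simp [Real.zero_rpow hβ.ne']

lemma integral_one_add_mul_rpow_withDensity {β l : ℝ} (hβ : 0 < β) (hl : 0 ≤ l) :
    ∫ x, (1 + l * x) ^ (-(1 + β)) ∂(volume.restrict (Ioo (0 : ℝ) 1)).withDensity
      (fun x => ENNReal.ofReal (β * x ^ (β - 1))) = (1 + l) ^ (-β) := by
  rw [integral_withDensity_eq_integral_toReal_smul (by fun_prop)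
    (ae_of_all _ fun _ => ENNReal.ofReal_lt_top), ← integral_rpow_mul_one_add_mul_rpow hβ hl,
    intervalIntegral.integral_of_le zero_le_one, integral_Ioc_eq_integral_Ioo]
  refine setIntegral_congr_fun measurableSet_Ioo fun x hx => ?_
  have : 0 ≤ β * x ^ (β - 1) := by have := hx.1; positivity
  simp [ENNReal.toReal_ofReal this]

section FixedPoint

variable {ν : Measure ℝ} {Φ : ℝ → ℝ}

lemma integrable_comp_mul_of_continuousOn [IsFiniteMeasure ν] (hν : ∀ᵐ t ∂ν, t ∈ Icc 0 1)
    {f : ℝ → ℝ} (hf : ContinuousOn f (Ici 0)) {l : ℝ} (hl : 0 ≤ l) :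
    Integrable (fun t => f (l * t)) ν := by
  rw [← Measure.restrict_eq_self_of_ae_mem hν]
  exact (hf.comp (continuousOn_const.mul continuousOn_id)
    fun t ht => mul_nonneg hl ht.1).integrableOn_compact isCompact_Icc

lemma eqOn_zero_of_eq_mul_integral [IsProbabilityMeasure ν] (hν : ∀ᵐ t ∂ν, t ∈ Icc 0 1)
    (hΦ : ∀ l, 0 < l → |Φ l| < 1) {d : ℝ → ℝ} (hd : ContinuousOn d (Ici 0)) (hd0 : d 0 = 0)
    (hdeq : ∀ l, 0 ≤ l → d l = Φ l * ∫ t, d (l * t) ∂ν) :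
    EqOn d 0 (Ici 0) := by
  intro L (hL : 0 ≤ L)
  obtain ⟨m, hm, hmax⟩ := isCompact_Icc.exists_isMaxOn (nonempty_Icc.mpr hL)
    ((hd.mono Icc_subset_Ici_self).abs)
  suffices hdm : |d m| = 0 from
    abs_eq_zero.mp (le_antisymm (hdm ▸ hmax ⟨hL, le_rfl⟩) (abs_nonneg _))
  rcases hm.1.eq_or_lt with rfl | hm0
  · simp [hd0]
  have hint : |∫ t, d (m * t) ∂ν| ≤ |d m| := by
    have hbound : ∀ᵐ t ∂ν, ‖d (m * t)‖ ≤ |d m| := hν.mono fun t ht =>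
      hmax ⟨mul_nonneg hm.1 ht.1, (mul_le_of_le_one_right hm.1 ht.2).trans hm.2⟩
    simpa using norm_integral_le_of_norm_le (integrable_const |d m|) hbound
  have hcontract : |d m| ≤ |Φ m| * |d m| := calc
    |d m| = |Φ m| * |∫ t, d (m * t) ∂ν| := by rw [hdeq m hm.1, abs_mul]
    _ ≤ |Φ m| * |d m| := by gcongr
  exact le_antisymm (by nlinarith [hΦ m hm0, abs_nonneg (d m)]) (abs_nonneg _)

lemma eqOn_of_eq_mul_integral [IsProbabilityMeasure ν] (hν : ∀ᵐ t ∂ν, t ∈ Icc 0 1)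
    (hΦ : ∀ l, 0 < l → |Φ l| < 1) {f g : ℝ → ℝ} (hf : ContinuousOn f (Ici 0))
    (hg : ContinuousOn g (Ici 0)) (h0 : f 0 = g 0)
    (hfeq : ∀ l, 0 ≤ l → f l = Φ l * ∫ t, f (l * t) ∂ν)
    (hgeq : ∀ l, 0 ≤ l → g l = Φ l * ∫ t, g (l * t) ∂ν) :
    EqOn f g (Ici 0) := by
  intro l hl
  refine sub_eq_zero.mp (eqOn_zero_of_eq_mul_integral hν hΦ (hf.sub hg) (sub_eq_zero.mpr h0)
    (fun l hl => ?_) hl)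
  rw [Pi.sub_apply, hfeq l hl, hgeq l hl, ← mul_sub, ← integral_sub
    (integrable_comp_mul_of_continuousOn hν hf hl) (integrable_comp_mul_of_continuousOn hν hg hl)]
  rfl

end FixedPoint

lemma ProbabilityTheory.IndepFun.integral_comp_eq_integral_integral {Ω α β : Type*}
    [MeasurableSpace Ω] [MeasurableSpace α] [MeasurableSpace β] {μ : Measure Ω} [IsFiniteMeasure μ]
    {X : Ω → α} {Y : Ω → β} (hXY : IndepFun X Y μ) (hX : AEMeasurable X μ)
    (hY : AEMeasurable Y μ) {F : α × β → ℝ} (hF : Measurable F)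
    (hFi : Integrable (fun ω => F (X ω, Y ω)) μ) :
    ∫ ω, F (X ω, Y ω) ∂μ = ∫ x, ∫ y, F (x, y) ∂(μ.map Y) ∂(μ.map X) := by
  have hmap := hXY.map_prod_eq_prod_map_map hX hY
  rw [← integral_map (hX.prodMk hY) hF.aestronglyMeasurable, hmap]
  refine integral_prod F ?_
  rw [← hmap]
  exact (integrable_map_measure hF.aestronglyMeasurable (hX.prodMk hY)).mpr hFi

lemma norm_exp_neg_mul_le_one {l s : ℝ} (hl : 0 ≤ l) (hs : 0 ≤ s) : ‖Real.exp (-l * s)‖ ≤ 1 := by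
  rw [Real.norm_eq_abs, abs_of_pos (Real.exp_pos _), Real.exp_le_one_iff]
  nlinarith

section Laplace

variable {Ω : Type*} [MeasurableSpace Ω] {μ : Measure Ω}

lemma continuousOn_integral_exp_neg_mul [IsFiniteMeasure μ] {S : Ω → ℝ} (hSm : Measurable S)
    (hS : ∀ᵐ ω ∂μ, 0 ≤ S ω) :
    ContinuousOn (fun l => ∫ ω, Real.exp (-l * S ω) ∂μ) (Ici 0) :=
  continuousOn_of_dominated (bound := fun _ => 1)
    (fun l _ => (by fun_prop : Measurable fun ω => Real.exp (-l * S ω)).aestronglyMeasurable)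
    (fun _ hl => hS.mono fun _ hs => norm_exp_neg_mul_le_one hl hs) (integrable_const 1)
    (ae_of_all _ fun _ => by fun_prop)

lemma integral_exp_neg_mul_eq_of_eq_add_mul [IsProbabilityMeasure μ] {X θ S S' : Ω → ℝ}
    (hXm : Measurable X) (hθm : Measurable θ) (hS'm : Measurable S')
    (hindep : iIndepFun ![X, θ, S'] μ) (hident : IdentDistrib S' S μ μ)
    (hθ : ∀ᵐ ω ∂μ, 0 ≤ θ ω) (hS : ∀ᵐ ω ∂μ, 0 ≤ S ω)
    (hfix : ∀ᵐ ω ∂μ, S ω = X ω + θ ω * S' ω) {l : ℝ} (hl : 0 ≤ l) :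
    ∫ ω, Real.exp (-l * S ω) ∂μ = (∫ ω, Real.exp (-l * X ω) ∂μ) *
      ∫ t, ∫ ω, Real.exp (-(l * t) * S ω) ∂μ ∂(μ.map θ) := by
  have hmeas : ∀ i, Measurable (![X, θ, S'] i) := by
    intro i; fin_cases i <;> assumption
  have hX_θS' : IndepFun X (fun ω => (θ ω, S' ω)) μ := by
    simpa using (hindep.indepFun_prodMk hmeas 1 2 0 (by decide) (by decide)).symm
  have hθ_S' : IndepFun θ S' μ := by
    simpa using hindep.indepFun (show (1 : Fin 3) ≠ 2 by decide)
  have hS' : ∀ᵐ ω ∂μ, 0 ≤ S' ω := hident.symm.ae_snd measurableSet_Ici hS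
  have hF : Measurable fun p : ℝ × ℝ => Real.exp (-l * (p.1 * p.2)) := by fun_prop
  have hFi : Integrable (fun ω => Real.exp (-l * (θ ω * S' ω))) μ :=
    (integrable_const 1).mono' (hF.comp (hθm.prodMk hS'm)).aestronglyMeasurable <|
      (hθ.and hS').mono fun ω h => norm_exp_neg_mul_le_one hl (mul_nonneg h.1 h.2)
  have hsplit : ∫ ω, Real.exp (-l * S ω) ∂μ =
      ∫ ω, Real.exp (-l * X ω) * Real.exp (-l * (θ ω * S' ω)) ∂μ := by
    refine integral_congr_ae ?_
    filter_upwards [hfix] with ω hω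
    rw [hω, ← Real.exp_add]
    ring_nf
  have hinner : ∀ t : ℝ, ∫ s, Real.exp (-l * (t * s)) ∂(μ.map S') =
      ∫ ω, Real.exp (-(l * t) * S ω) ∂μ := by
    intro t
    calc ∫ s, Real.exp (-l * (t * s)) ∂(μ.map S')
        = ∫ ω, Real.exp (-(l * t) * S' ω) ∂μ := by
          rw [integral_map hS'm.aemeasurable (by fun_prop)]
          simp only [neg_mul, mul_assoc]
      _ = ∫ ω, Real.exp (-(l * t) * S ω) ∂μ :=
          (hident.comp (by fun_prop : Measurable fun s => Real.exp (-(l * t) * s))).integral_eq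
  have hprod : ∫ ω, Real.exp (-l * X ω) * Real.exp (-l * (θ ω * S' ω)) ∂μ =
      (∫ ω, Real.exp (-l * X ω) ∂μ) * ∫ ω, Real.exp (-l * (θ ω * S' ω)) ∂μ :=
    hX_θS'.integral_fun_comp_mul_comp (f := fun x => Real.exp (-l * x))
      (g := fun p => Real.exp (-l * (p.1 * p.2))) hXm.aemeasurable
      (hθm.prodMk hS'm).aemeasurable (by fun_prop) hF.aestronglyMeasurable
  rw [hsplit, hprod,
    hθ_S'.integral_comp_eq_integral_integral hθm.aemeasurable hS'm.aemeasurable hF hFi]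
  simp only [hinner]

end Laplace

theorem stmt_16_general {Ω : Type*} [MeasureSpace Ω] [IsProbabilityMeasure (ℙ : Measure Ω)]
    (β : ℝ) (hβ : 0 < β) (X θ S S' : Ω → ℝ)
    (hXm : Measurable X) (hθm : Measurable θ) (hSm : Measurable S)
    (hS'm : Measurable S')
    (hXlaw : ∀ l : ℝ, 0 ≤ l → ∫ ω, Real.exp (-l * X ω) ∂ℙ = 1 / (1 + l))
    (hθlaw : Measure.map θ ℙ =
      (volume.restrict (Set.Ioo (0:ℝ) 1)).withDensity
        (fun x => ENNReal.ofReal (β * x ^ (β - 1))))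
    (hindep : iIndepFun ![X, θ, S'] ℙ)
    (hident : IdentDistrib S' S ℙ ℙ)
    (hSnonneg : ∀ᵐ ω ∂ℙ, 0 ≤ S ω)
    (hfix : ∀ᵐ ω ∂ℙ, S ω = X ω + θ ω * S' ω) :
    ∀ l : ℝ, 0 ≤ l → ∫ ω, Real.exp (-l * S ω) ∂ℙ = (1 + l) ^ (-(1 + β)) := by
  have : IsProbabilityMeasure (Measure.map θ ℙ) :=
    Measure.isProbabilityMeasure_map hθm.aemeasurable
  have hν : ∀ᵐ t ∂(Measure.map θ ℙ), t ∈ Icc (0 : ℝ) 1 := by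
    rw [hθlaw]
    exact (withDensity_absolutelyContinuous _ _).ae_le
      ((ae_restrict_mem measurableSet_Ioo).mono fun _ h => Ioo_subset_Icc_self h)
  have hθ : ∀ᵐ ω ∂ℙ, 0 ≤ θ ω :=
    ((ae_map_iff hθm.aemeasurable measurableSet_Icc).mp hν).mono fun _ h => h.1
  have hΦ : ∀ l : ℝ, 0 < l → |1 / (1 + l)| < 1 := fun l hl => by
    rw [abs_of_pos (by positivity), div_lt_one (by positivity)]
    linarith
  have hgamma : ContinuousOn (fun l : ℝ => (1 + l) ^ (-(1 + β))) (Ici 0) :=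
    fun l (hl : 0 ≤ l) => ((by fun_prop : ContinuousAt (fun y : ℝ => 1 + y) l).rpow_const
      (Or.inl (by linarith))).continuousWithinAt
  intro l hl
  refine eqOn_of_eq_mul_integral hν hΦ (continuousOn_integral_exp_neg_mul hSm hSnonneg) hgamma
    (by simp) (fun y hy => ?_) (fun y hy => ?_) hl
  · rw [integral_exp_neg_mul_eq_of_eq_add_mul hXm hθm hS'm hindep hident hθ hSnonneg hfix hy,
      hXlaw y hy]
  · rw [hθlaw, integral_one_add_mul_rpow_withDensity hβ hy, show -(1 + β) = -1 + -β by ring,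
      Real.rpow_add (by positivity), Real.rpow_neg_one, one_div]

/-- If S ≥ 0 satisfies the fixed point equation S = X + θS' with X, θ, S'
independent, X exponential(1) (Laplace transform 1/(1+λ)), θ with density
βx^{β-1} on (0,1), and S' distributed as S, then S has Laplace transform
(1+λ)^{-(1+β)}, i.e. S is Gamma(1+β). -/
theorem stmt_16 {Ω : Type*} [MeasureSpace Ω] [IsProbabilityMeasure (ℙ : Measure Ω)]
    (β : ℝ) (hβ : 0 < β) (X θ S S' : Ω → ℝ)
    (hXm : Measurable X) (hθm : Measurable θ) (hSm : Measurable S)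
    (hS'm : Measurable S')
    (hXnonneg : ∀ᵐ ω ∂ℙ, 0 ≤ X ω)
    (hXlaw : ∀ l : ℝ, 0 ≤ l → ∫ ω, Real.exp (-l * X ω) ∂ℙ = 1 / (1 + l))
    (hθlaw : Measure.map θ ℙ =
      (volume.restrict (Set.Ioo (0:ℝ) 1)).withDensity
        (fun x => ENNReal.ofReal (β * x ^ (β - 1))))
    (hindep : iIndepFun ![X, θ, S'] ℙ)
    (hident : IdentDistrib S' S ℙ ℙ)
    (hSnonneg : ∀ᵐ ω ∂ℙ, 0 ≤ S ω)
    (hfix : ∀ᵐ ω ∂ℙ, S ω = X ω + θ ω * S' ω) :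
    ∀ l : ℝ, 0 ≤ l → ∫ ω, Real.exp (-l * S ω) ∂ℙ = (1 + l) ^ (-(1 + β)) :=
  stmt_16_general β hβ X θ S S' hXm hθm hSm hS'm hXlaw hθlaw hindep hident hSnonneg hfix
end

section
/- Suppose ψ : [0,∞) → (0,∞) is differentiable, Φ : [0,∞) → (0,∞) is continuous with Φ(0)=1, and ψ satisfies ψ(λ)λ^β / Φ(λ) = β ∫₀^λ ψ(y) y^{β-1} dy for all λ > 0, for some β > 0. Then ψ(λ) = Φ(λ) exp(-β ∫₀^λ (1-Φ(s))/s ds) for all λ ≥ 0. -/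
/-! Write `G t = β ∫₀^t ψ(y) y^(β-1) dy`, so that the equation reads `Φ = ψ t^β / G`. Then
`log ψ - log Φ = log G - β log t` has derivative `β ψ t^(β-1) / G - β / t = -β (1 - Φ t) / t`
on `(0, ∞)` and vanishes at `0`, and the fundamental theorem of calculus gives the formula.
The one analytic point is integrability of `(1 - Φ s) / s` at `0`: differentiability of `ψ` at `0`
gives `|ψ y - 1| ≤ C y`, hence `G t` and `ψ t t^β` both equal `t^β (1 + O(t))`, so
`1 - Φ t = O(t)`. -/

open MeasureTheory intervalIntegral Real Set Filter Topology

section PowerWeight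

variable {ψ : ℝ → ℝ} {β t : ℝ}

lemma integral_rpow_sub_one (hβ : 0 < β) : ∫ y in (0:ℝ)..t, y ^ (β - 1) = t ^ β / β := by
  rw [integral_rpow (Or.inl (by linarith)), sub_add_cancel, zero_rpow hβ.ne', sub_zero]

lemma intervalIntegrable_mul_rpow (hβ : 0 < β) (ht : 0 ≤ t) (hψ : ContinuousOn ψ (Icc 0 t)) :
    IntervalIntegrable (fun y => ψ y * y ^ (β - 1)) volume 0 t :=
  (intervalIntegrable_rpow' (by linarith)).continuousOn_mul (by rwa [uIcc_of_le ht])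

lemma abs_mul_integral_mul_rpow_sub_le (hβ : 0 < β) (ht : 0 ≤ t)
    (hψ : ContinuousOn ψ (Icc 0 t)) {c ε : ℝ} (hε : ∀ y ∈ Icc 0 t, |ψ y - c| ≤ ε) :
    |β * (∫ y in (0:ℝ)..t, ψ y * y ^ (β - 1)) - c * t ^ β| ≤ ε * t ^ β := by
  have hpow : IntervalIntegrable (fun y : ℝ => y ^ (β - 1)) volume 0 t :=
    intervalIntegrable_rpow' (by linarith)
  have hsplit : β * (∫ y in (0:ℝ)..t, ψ y * y ^ (β - 1)) - c * t ^ β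
      = β * ∫ y in (0:ℝ)..t, (ψ y - c) * y ^ (β - 1) := by
    simp only [sub_mul]
    rw [integral_sub (intervalIntegrable_mul_rpow hβ ht hψ) (hpow.const_mul c),
      intervalIntegral.integral_const_mul, integral_rpow_sub_one hβ]
    field_simp
  have hle : |∫ y in (0:ℝ)..t, (ψ y - c) * y ^ (β - 1)| ≤ ε * (t ^ β / β) := by
    rw [← integral_rpow_sub_one hβ, ← intervalIntegral.integral_const_mul, ← Real.norm_eq_abs]
    refine norm_integral_le_of_norm_le ht (ae_of_all _ fun y hy => ?_) (hpow.const_mul ε)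
    rw [Real.norm_eq_abs, abs_mul, abs_of_nonneg (rpow_nonneg hy.1.le _)]
    exact mul_le_mul_of_nonneg_right (hε y ⟨hy.1.le, hy.2⟩) (rpow_nonneg hy.1.le _)
  calc |β * (∫ y in (0:ℝ)..t, ψ y * y ^ (β - 1)) - c * t ^ β|
      = β * |∫ y in (0:ℝ)..t, (ψ y - c) * y ^ (β - 1)| := by
        rw [hsplit, abs_mul, abs_of_pos hβ]
    _ ≤ β * (ε * (t ^ β / β)) := by gcongr
    _ = ε * t ^ β := by field_simp

lemma hasDerivAt_integral_mul_rpow (hβ : 0 < β) (ht : 0 < t) (hψ : ContinuousOn ψ (Ici 0)) :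
    HasDerivAt (fun u => ∫ y in (0:ℝ)..u, ψ y * y ^ (β - 1)) (ψ t * t ^ (β - 1)) t := by
  have hcont : ContinuousOn (fun y => ψ y * y ^ (β - 1)) (Ioi 0) :=
    (hψ.mono Ioi_subset_Ici_self).mul fun y hy =>
      (continuousAt_rpow_const y _ (Or.inl hy.ne')).continuousWithinAt
  exact integral_hasDerivAt_right
    (intervalIntegrable_mul_rpow hβ ht.le (hψ.mono Icc_subset_Ici_self))
    (hcont.stronglyMeasurableAtFilter isOpen_Ioi t ht) (hcont.continuousAt (Ioi_mem_nhds ht))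

end PowerWeight

lemma abs_one_sub_mul_div_le {p q a ε : ℝ} (ha : 0 < a) (hε : ε ≤ 1 / 2) (hp : |p - 1| ≤ ε)
    (hq : |q - a| ≤ ε * a) : |1 - p * a / q| ≤ 4 * ε := by
  rw [abs_le] at hp hq
  have hq' : a / 2 ≤ q := by nlinarith
  have hq0 : 0 < q := by linarith
  rw [one_sub_div hq0.ne', abs_div, abs_of_pos hq0, div_le_iff₀ hq0, abs_le]
  constructor <;> nlinarith

lemma exists_pos_eventually_abs_sub_le_mul {f : ℝ → ℝ} {x : ℝ}
    (hf : DifferentiableWithinAt ℝ f (Ici x) x) :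
    ∃ C > 0, ∀ᶠ y in 𝓝[≥] x, |f y - f x| ≤ C * (y - x) := by
  obtain ⟨C, hC, hbound⟩ := hf.hasFDerivWithinAt.isBigO_sub.exists_pos
  refine ⟨C, hC, ?_⟩
  filter_upwards [hbound.bound, self_mem_nhdsWithin] with y hy (hxy : x ≤ y)
  rwa [Real.norm_eq_abs, Real.norm_eq_abs, abs_of_nonneg (sub_nonneg.2 hxy)] at hy

lemma intervalIntegrable_of_continuousOn_Ioc_of_eventually_abs_le {f : ℝ → ℝ} {a b C : ℝ}
    (hab : a ≤ b) (hf : ContinuousOn f (Ioc a b)) (hC : ∀ᶠ t in 𝓝[>] a, |f t| ≤ C) :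
    IntervalIntegrable f volume a b := by
  rcases hab.eq_or_lt with rfl | hab
  · exact IntervalIntegrable.refl
  obtain ⟨u, hu, hIoo⟩ := mem_nhdsGT_iff_exists_Ioo_subset.1 hC
  set c := min ((a + u) / 2) b
  have hac : a < c := lt_min (by linarith [mem_Ioi.1 hu]) hab
  have hcu : c < u := (min_le_left _ _).trans_lt (by linarith [mem_Ioi.1 hu])
  have hcb : c ≤ b := min_le_right _ _
  refine IntervalIntegrable.trans (b := c) ?_ ?_
  · rw [intervalIntegrable_iff_integrableOn_Ioc_of_le hac.le]
    refine IntegrableOn.of_bound measure_Ioc_lt_top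
      ((hf.mono (Ioc_subset_Ioc_right hcb)).aestronglyMeasurable measurableSet_Ioc) C
      ((ae_restrict_iff' measurableSet_Ioc).2 (ae_of_all _ fun t ht => ?_))
    exact hIoo ⟨ht.1, ht.2.trans_lt hcu⟩
  · exact (hf.mono (Icc_subset_Ioc_iff hcb |>.2 ⟨hac, le_rfl⟩)).intervalIntegrable_of_Icc hcb

section Equation

variable {ψ Φ : ℝ → ℝ} {β : ℝ}

lemma hasDerivAt_log_sub_log (hβ : 0 < β) (hψ : ContinuousOn ψ (Ici 0))
    (hψpos : ∀ x ≥ (0:ℝ), 0 < ψ x) (hΦpos : ∀ x ≥ (0:ℝ), 0 < Φ x)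
    (heq : ∀ l : ℝ, 0 < l → ψ l * l ^ β / Φ l = β * ∫ y in (0:ℝ)..l, ψ y * y ^ (β - 1))
    {x : ℝ} (hx : 0 < x) :
    HasDerivAt (fun t => log (ψ t) - log (Φ t)) (-β * ((1 - Φ x) / x)) x := by
  have hψx := hψpos x hx.le
  have hΦx := hΦpos x hx.le
  have hG := (hasDerivAt_integral_mul_rpow hβ hx hψ).const_mul β
  have hGpos : 0 < β * ∫ y in (0:ℝ)..x, ψ y * y ^ (β - 1) := by
    rw [← heq x hx]; positivity
  have hlog := (hG.log hGpos.ne').sub ((hasDerivAt_log hx.ne').const_mul β)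
  have hnear : (fun t => log (ψ t) - log (Φ t)) =ᶠ[𝓝 x]
      fun t => log (β * ∫ y in (0:ℝ)..t, ψ y * y ^ (β - 1)) - β * log t := by
    filter_upwards [Ioi_mem_nhds hx] with t (ht : 0 < t)
    have hψt := hψpos t ht.le
    rw [← heq t ht, log_div (by positivity) (hΦpos t ht.le).ne', log_mul hψt.ne'
      (rpow_pos_of_pos ht β).ne', log_rpow ht]
    ring
  refine (hlog.congr_of_eventuallyEq hnear).congr_deriv ?_
  rw [← heq x hx, rpow_sub_one hx.ne']
  field_simp
  ring

lemma eventually_abs_one_sub_div_le (hβ : 0 < β) (hψ : ContinuousOn ψ (Ici 0))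
    {C : ℝ} (hC0 : 0 < C) (hC : ∀ᶠ y in 𝓝[≥] 0, |ψ y - 1| ≤ C * y)
    (hψpos : ∀ x ≥ (0:ℝ), 0 < ψ x)
    (heq : ∀ l : ℝ, 0 < l → ψ l * l ^ β / Φ l = β * ∫ y in (0:ℝ)..l, ψ y * y ^ (β - 1)) :
    ∀ᶠ t in 𝓝[>] 0, |(1 - Φ t) / t| ≤ 4 * C := by
  obtain ⟨u, hu, hIco⟩ := mem_nhdsGE_iff_exists_Ico_subset.1 hC
  filter_upwards [Ioo_mem_nhdsGT (lt_min hu (by positivity : (0:ℝ) < 1 / (2 * C)))]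
    with t ⟨ht, htu⟩
  have hCt : C * t ≤ 1 / 2 := by
    have := (lt_min_iff.1 htu).2
    rw [lt_div_iff₀ (by positivity)] at this
    linarith
  have hbound : ∀ y ∈ Icc 0 t, |ψ y - 1| ≤ C * t := fun y hy =>
    (hIco ⟨hy.1, hy.2.trans_lt (lt_min_iff.1 htu).1⟩).trans
      (mul_le_mul_of_nonneg_left hy.2 hC0.le)
  have hG := abs_mul_integral_mul_rpow_sub_le hβ ht.le (hψ.mono Icc_subset_Ici_self) hbound
  rw [one_mul] at hG
  have hΦt : Φ t = ψ t * t ^ β / (β * ∫ y in (0:ℝ)..t, ψ y * y ^ (β - 1)) := by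
    have := hψpos t ht.le
    rw [← heq t ht, div_div_cancel₀ (by positivity)]
  rw [abs_div, abs_of_pos ht, div_le_iff₀ ht, hΦt, mul_assoc]
  exact abs_one_sub_mul_div_le (rpow_pos_of_pos ht β) hCt (hbound t ⟨ht.le, le_rfl⟩) hG

end Equation

/-- ODE step: if ψ, Φ > 0 on [0,∞), ψ differentiable, Φ continuous with
Φ(0)=1, and ψ(λ)λ^β/Φ(λ) = β∫₀^λ ψ(y)y^{β-1}dy for λ > 0, then
ψ(λ) = Φ(λ)·exp(-β∫₀^λ (1-Φ(s))/s ds) for all λ ≥ 0. -/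
theorem stmt_17 (ψ Φ : ℝ → ℝ) (β : ℝ) (hβ : 0 < β)
    (hψdiff : DifferentiableOn ℝ ψ (Set.Ici 0))
    (hΦcont : ContinuousOn Φ (Set.Ici 0))
    (hψpos : ∀ x ≥ (0:ℝ), 0 < ψ x) (hΦpos : ∀ x ≥ (0:ℝ), 0 < Φ x)
    (hΦ0 : Φ 0 = 1) (hψ0 : ψ 0 = 1)
    (heq : ∀ l : ℝ, 0 < l →
      ψ l * l ^ β / Φ l = β * ∫ y in (0:ℝ)..l, ψ y * y ^ (β - 1)) :
    ∀ l : ℝ, 0 ≤ l →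
      ψ l = Φ l * Real.exp (-β * ∫ s in (0:ℝ)..l, (1 - Φ s) / s) := by
  intro l hl
  have hψ := hψdiff.continuousOn
  obtain ⟨C, hC0, hC⟩ := exists_pos_eventually_abs_sub_le_mul (hψdiff 0 self_mem_Ici)
  simp only [hψ0, sub_zero] at hC
  have hint : IntervalIntegrable (fun s => (1 - Φ s) / s) volume 0 l :=
    intervalIntegrable_of_continuousOn_Ioc_of_eventually_abs_le hl
      ((continuousOn_const.sub (hΦcont.mono fun s hs => hs.1.le)).div continuousOn_id
        fun s hs => hs.1.ne')
      (eventually_abs_one_sub_div_le hβ hψ hC0 hC hψpos heq)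
  have hlog : ContinuousOn (fun t => log (ψ t) - log (Φ t)) (Icc 0 l) :=
    ((hψ.mono Icc_subset_Ici_self).log fun x hx => (hψpos x hx.1).ne').sub
      ((hΦcont.mono Icc_subset_Ici_self).log fun x hx => (hΦpos x hx.1).ne')
  have hftc := integral_eq_sub_of_hasDerivAt_of_le hl hlog
    (fun x hx => hasDerivAt_log_sub_log hβ hψ hψpos hΦpos heq hx.1) (hint.const_mul (-β))
  simp only [intervalIntegral.integral_const_mul, hψ0, hΦ0, log_one, sub_self, sub_zero] at hftc
  rw [hftc, exp_sub, exp_log (hψpos l hl), exp_log (hΦpos l hl)]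
  field_simp [(hΦpos l hl).ne']
end
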